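/- Let β > 0, t > 0, and x ∈ ℝ with x ≠ 0. Then ∫_t^∞ (r−t)^{−3/2} · exp( −r x²/(2t(r−t)) − β r ) dr = (√(2β)/|x|) · ∫_t^∞ (r−t)^{−1/2} · exp( −r x²/(2t(r−t)) − β r ) dr, both integrals being finite. Equivalently, for the prior μ(dr) = (√β/Γ(1/2)) r^{−1/2} e^{−βr} dr on (0,∞) (the Γ(1/2,β) distribution), the conditional pinning rate f(t,x) := (∫_t^∞ (r−t)^{−1} √(r/(r−t)) e^{−r x²/(2t(r−t))} μ(dr)) / (∫_t^∞ √(r/(r−t)) e^{−r x²/(2t(r−t))} μ(dr)) equals √(2β)/|x|, independently of t. -/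

import Mathlib

/-!
Substituting `s = r - t` turns both integrals into `exp (-x²/(2t) - βt)` times
`∫₀^∞ s^c exp (-a/s - βs) ds` with `a = x²/2` and `c = -3/2`, `-1/2`. The inversion
`s ↦ (a/β)/s` swaps the two terms of the exponent and sends `c` to `-2 - c`, so the
`c = -3/2` integral is `(a/β)^(-1/2) = √(2β)/|x|` times the `c = -1/2` one. Under the
`Γ(1/2, β)` prior the factor `√(r/(r-t)) · r^(-1/2)` is `(r-t)^(-1/2)`, so the pinning rate is
the ratio of these two integrals.
-/

open MeasureTheory Set Real

section ChangeOfVariables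

variable {E : Type*} [NormedAddCommGroup E]

theorem setIntegral_Ioi_comp_sub_right [NormedSpace ℝ E] (g : ℝ → E) (a d : ℝ) :
    ∫ x in Ioi a, g (x - d) = ∫ x in Ioi (a - d), g x := by
  have hpre : (fun x => x - d) ⁻¹' Ioi (a - d) = Ioi a := by simp
  rw [← hpre]
  exact (measurePreserving_sub_right volume d).setIntegral_preimage_emb
    (MeasurableEquiv.subRight d).measurableEmbedding g _

theorem integrableOn_Ioi_comp_sub_right_iff (g : ℝ → E) (a d : ℝ) :
    IntegrableOn (fun x => g (x - d)) (Ioi a) ↔ IntegrableOn g (Ioi (a - d)) := by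
  have hpre : (fun x => x - d) ⁻¹' Ioi (a - d) = Ioi a := by simp
  rw [← hpre]
  exact (measurePreserving_sub_right volume d).integrableOn_comp_preimage
    (MeasurableEquiv.subRight d).measurableEmbedding

theorem image_const_div_Ioi_zero {k : ℝ} (hk : 0 < k) : (k / ·) '' Ioi 0 = Ioi 0 := by
  ext s
  refine ⟨?_, fun hs => ⟨k / s, div_pos hk hs, div_div_cancel₀ hk.ne'⟩⟩
  rintro ⟨u, hu, rfl⟩
  exact div_pos hk hu

theorem hasDerivAt_const_div {k u : ℝ} (hu : u ≠ 0) : HasDerivAt (k / ·) (-(k / u ^ 2)) u := by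
  simpa [div_eq_mul_inv, neg_div] using (hasDerivAt_inv hu).const_mul k

theorem injOn_const_div_Ioi_zero {k : ℝ} (hk : k ≠ 0) : InjOn (k / ·) (Ioi 0) :=
  fun _ _ _ _ h => inv_injective (mul_left_cancel₀ hk (by simpa only [div_eq_mul_inv] using h))

theorem integral_comp_const_div_Ioi [NormedSpace ℝ E] (g : ℝ → E) {k : ℝ} (hk : 0 < k) :
    ∫ u in Ioi 0, (k / u ^ 2) • g (k / u) = ∫ s in Ioi 0, g s := by
  conv_rhs => rw [← image_const_div_Ioi_zero hk]
  rw [integral_image_eq_integral_abs_deriv_smul measurableSet_Ioi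
    (fun u (hu : 0 < u) => (hasDerivAt_const_div hu.ne').hasDerivWithinAt)
    (injOn_const_div_Ioi_zero hk.ne')]
  refine setIntegral_congr_fun measurableSet_Ioi fun u (hu : 0 < u) => ?_
  rw [abs_neg, abs_of_pos (by positivity)]

theorem integrableOn_Ioi_comp_const_div_iff [NormedSpace ℝ E] (g : ℝ → E) {k : ℝ}
    (hk : 0 < k) :
    IntegrableOn (fun u => (k / u ^ 2) • g (k / u)) (Ioi 0) ↔ IntegrableOn g (Ioi 0) := by
  conv_rhs => rw [← image_const_div_Ioi_zero hk]
  rw [integrableOn_image_iff_integrableOn_abs_deriv_smul measurableSet_Ioi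
    (fun u (hu : 0 < u) => (hasDerivAt_const_div hu.ne').hasDerivWithinAt)
    (injOn_const_div_Ioi_zero hk.ne')]
  refine integrableOn_congr_fun (fun u (hu : 0 < u) => ?_) measurableSet_Ioi
  rw [abs_neg, abs_of_pos (by positivity)]

end ChangeOfVariables

/-- Unnormalised density of the generalised inverse Gaussian distribution. -/
noncomputable def gigKernel (c a b s : ℝ) : ℝ := s ^ c * exp (-a / s - b * s)

namespace gigKernel

theorem pos (c a b : ℝ) {s : ℝ} (hs : 0 < s) : 0 < gigKernel c a b s := by
  unfold gigKernel; positivity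

variable {c c' a b : ℝ}

theorem const_div_sq_mul_comp_const_div (hcc' : c + c' = -2) (ha : 0 < a) (hb : 0 < b) {s : ℝ}
    (hs : 0 < s) :
    a / b / s ^ 2 * gigKernel c a b (a / b / s) = (a / b) ^ (c + 1) * gigKernel c' a b s := by
  have hk : 0 < a / b := div_pos ha hb
  have hexp : -a / (a / b / s) - b * (a / b / s) = -a / s - b * s := by
    field_simp
    ring
  have hpow : a / b / s ^ 2 * (a / b / s) ^ c = (a / b) ^ (c + 1) * s ^ c' := by
    obtain rfl : c' = -2 - c := by linarith
    rw [div_rpow hk.le hs.le, rpow_add hk, rpow_one, rpow_sub hs, rpow_neg hs.le, rpow_two]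
    field_simp
  rw [gigKernel, gigKernel, hexp, ← mul_assoc, hpow, mul_assoc]

theorem integrableOn_iff (hcc' : c + c' = -2) (ha : 0 < a) (hb : 0 < b) :
    IntegrableOn (gigKernel c a b) (Ioi 0) ↔ IntegrableOn (gigKernel c' a b) (Ioi 0) := by
  have hk : 0 < a / b := div_pos ha hb
  rw [← integrableOn_Ioi_comp_const_div_iff _ hk]
  simp only [smul_eq_mul]
  rw [integrableOn_congr_fun (fun s (hs : s ∈ Ioi 0) =>
    const_div_sq_mul_comp_const_div hcc' ha hb hs) measurableSet_Ioi]
  exact integrable_const_mul_iff (IsUnit.mk0 _ (rpow_pos_of_pos hk (c + 1)).ne') _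

theorem integral_eq (hcc' : c + c' = -2) (ha : 0 < a) (hb : 0 < b) :
    ∫ s in Ioi 0, gigKernel c a b s = (a / b) ^ (c + 1) * ∫ s in Ioi 0, gigKernel c' a b s := by
  rw [← integral_comp_const_div_Ioi _ (div_pos ha hb), ← integral_const_mul]
  exact setIntegral_congr_fun measurableSet_Ioi fun s (hs : 0 < s) =>
    const_div_sq_mul_comp_const_div hcc' ha hb hs

theorem integrableOn_of_neg_one_lt (hc : -1 < c) (ha : 0 < a) (hb : 0 < b) :
    IntegrableOn (gigKernel c a b) (Ioi 0) := by
  have hdom : IntegrableOn (fun s : ℝ => s ^ c * exp (-b * s)) (Ioi 0) := by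
    simpa only [rpow_one] using integrableOn_rpow_mul_exp_neg_mul_rpow hc one_pos hb
  refine hdom.mono' (by unfold gigKernel; fun_prop) ?_
  filter_upwards [self_mem_ae_restrict measurableSet_Ioi] with s (hs : 0 < s)
  rw [norm_of_nonneg (pos c a b hs).le, gigKernel]
  gcongr
  linarith [div_pos ha hs, neg_div s a]

theorem integrableOn_of_lt_neg_one (hc : c < -1) (ha : 0 < a) (hb : 0 < b) :
    IntegrableOn (gigKernel c a b) (Ioi 0) :=
  (integrableOn_iff (add_sub_cancel c (-2)) ha hb).2
    (integrableOn_of_neg_one_lt (by linarith) ha hb)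

theorem integral_pos (h : IntegrableOn (gigKernel c a b) (Ioi 0)) :
    0 < ∫ s in Ioi 0, gigKernel c a b s := by
  refine (setIntegral_pos_iff_support_of_nonneg_ae ?_ h).2 ?_
  · filter_upwards [self_mem_ae_restrict measurableSet_Ioi] with s (hs : 0 < s)
    exact (pos c a b hs).le
  · have hsupp : Ioi 0 ⊆ Function.support (gigKernel c a b) := fun s hs => (pos c a b hs).ne'
    rw [inter_eq_right.2 hsupp, volume_Ioi]
    exact ENNReal.zero_lt_top

end gigKernel

section PinningIntegrals

variable {c β t x : ℝ}

theorem rpow_sub_mul_exp_eq_exp_mul_gigKernel {r : ℝ} (ht : t ≠ 0) (hr : r ≠ t) :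
    (r - t) ^ c * exp (-(r * x ^ 2) / (2 * t * (r - t)) - β * r) =
      exp (-(x ^ 2 / (2 * t)) - β * t) * gigKernel c (x ^ 2 / 2) β (r - t) := by
  rw [gigKernel, mul_left_comm, ← exp_add]
  congr 2
  field_simp
  ring

theorem integrableOn_Ioi_rpow_sub_mul_exp_iff (ht : t ≠ 0) :
    IntegrableOn (fun r => (r - t) ^ c * exp (-(r * x ^ 2) / (2 * t * (r - t)) - β * r))
        (Ioi t) ↔ IntegrableOn (gigKernel c (x ^ 2 / 2) β) (Ioi 0) := by
  rw [integrableOn_congr_fun (fun r (hr : r ∈ Ioi t) =>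
      rpow_sub_mul_exp_eq_exp_mul_gigKernel ht (mem_Ioi.1 hr).ne') measurableSet_Ioi,
    ← sub_self t, ← integrableOn_Ioi_comp_sub_right_iff]
  exact integrable_const_mul_iff (IsUnit.mk0 _ (exp_pos _).ne') _

theorem setIntegral_Ioi_rpow_sub_mul_exp (ht : t ≠ 0) :
    ∫ r in Ioi t, (r - t) ^ c * exp (-(r * x ^ 2) / (2 * t * (r - t)) - β * r) =
      exp (-(x ^ 2 / (2 * t)) - β * t) * ∫ s in Ioi 0, gigKernel c (x ^ 2 / 2) β s := by
  rw [setIntegral_congr_fun measurableSet_Ioi fun r (hr : r ∈ Ioi t) =>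
      rpow_sub_mul_exp_eq_exp_mul_gigKernel ht (mem_Ioi.1 hr).ne',
    integral_const_mul, setIntegral_Ioi_comp_sub_right, sub_self]

theorem setIntegral_Ioi_rpow_neg_three_halves_eq (hβ : 0 < β) (ht : t ≠ 0) (hx : x ≠ 0) :
    ∫ r in Ioi t, (r - t) ^ (-(3:ℝ)/2) * exp (-(r * x ^ 2) / (2 * t * (r - t)) - β * r) =
      √(2 * β) / |x| *
        ∫ r in Ioi t, (r - t) ^ (-(1:ℝ)/2) *
          exp (-(r * x ^ 2) / (2 * t * (r - t)) - β * r) := by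
  have ha : 0 < x ^ 2 / 2 := by positivity
  have hrate : (x ^ 2 / 2 / β) ^ (-(3:ℝ)/2 + 1) = √(2 * β) / |x| := by
    have hsq : x ^ 2 / 2 / β = (|x| / √(2 * β)) ^ 2 := by
      rw [div_pow, sq_abs, sq_sqrt (by positivity)]
      ring
    rw [show -(3:ℝ)/2 + 1 = -(1 / 2) by norm_num, rpow_neg (by positivity), ← sqrt_eq_rpow, hsq,
      sqrt_sq (by positivity), inv_div]
  rw [setIntegral_Ioi_rpow_sub_mul_exp ht, setIntegral_Ioi_rpow_sub_mul_exp ht,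
    gigKernel.integral_eq (c' := -(1:ℝ)/2) (by norm_num) ha hβ, hrate]
  ring

theorem setIntegral_Ioi_rpow_neg_half_pos (hβ : 0 < β) (ht : t ≠ 0) (hx : x ≠ 0) :
    0 < ∫ r in Ioi t, (r - t) ^ (-(1:ℝ)/2) *
      exp (-(r * x ^ 2) / (2 * t * (r - t)) - β * r) := by
  rw [setIntegral_Ioi_rpow_sub_mul_exp ht]
  exact mul_pos (exp_pos _) <| gigKernel.integral_pos <|
    gigKernel.integrableOn_of_neg_one_lt (by norm_num) (by positivity) hβ

end PinningIntegrals

theorem sqrt_div_mul_rpow_neg_half {r u : ℝ} (hr : 0 < r) (hu : 0 < u) :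
    √(r / u) * r ^ (-(1:ℝ)/2) = u ^ (-(1:ℝ)/2) := by
  rw [neg_div, rpow_neg hr.le, rpow_neg hu.le, ← sqrt_eq_rpow, ← sqrt_eq_rpow, sqrt_div hr.le]
  field_simp

theorem sqrt_div_mul_exp_mul_gammaHalfPrior (C β y : ℝ) {r u : ℝ} (hr : 0 < r) (hu : 0 < u) :
    √(r / u) * exp y * (C * r ^ (-(1:ℝ)/2) * exp (-(β * r))) =
      C * (u ^ (-(1:ℝ)/2) * exp (y - β * r)) := by
  rw [sub_eq_add_neg, exp_add, ← sqrt_div_mul_rpow_neg_half hr hu]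
  ring

theorem inv_mul_sqrt_div_mul_exp_mul_gammaHalfPrior (C β y : ℝ) {r u : ℝ} (hr : 0 < r)
    (hu : 0 < u) :
    u⁻¹ * √(r / u) * exp y * (C * r ^ (-(1:ℝ)/2) * exp (-(β * r))) =
      C * (u ^ (-(3:ℝ)/2) * exp (y - β * r)) := by
  have hpow : u⁻¹ * u ^ (-(1:ℝ)/2) = u ^ (-(3:ℝ)/2) := by
    rw [← rpow_neg_one, ← rpow_add hu]
    norm_num
  rw [mul_assoc, mul_assoc, ← mul_assoc (√(r / u)),
    sqrt_div_mul_exp_mul_gammaHalfPrior C β y hr hu, ← hpow]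
  ring

theorem gamma_half_prior_pinning_rate (β t x : ℝ) (hβ : 0 < β) (ht : 0 < t) (hx : x ≠ 0) :
    IntegrableOn (fun r : ℝ => (r - t) ^ (-(3:ℝ)/2) *
        Real.exp (-(r * x ^ 2) / (2 * t * (r - t)) - β * r)) (Set.Ioi t) ∧
    IntegrableOn (fun r : ℝ => (r - t) ^ (-(1:ℝ)/2) *
        Real.exp (-(r * x ^ 2) / (2 * t * (r - t)) - β * r)) (Set.Ioi t) ∧
    (∫ r in Set.Ioi t, (r - t) ^ (-(3:ℝ)/2) *
        Real.exp (-(r * x ^ 2) / (2 * t * (r - t)) - β * r)) =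
      (Real.sqrt (2 * β) / |x|) *
        (∫ r in Set.Ioi t, (r - t) ^ (-(1:ℝ)/2) *
          Real.exp (-(r * x ^ 2) / (2 * t * (r - t)) - β * r)) ∧
    ((∫ r in Set.Ioi t, (r - t)⁻¹ * Real.sqrt (r / (r - t)) *
          Real.exp (-(r * x ^ 2) / (2 * t * (r - t))) *
          (Real.sqrt β / Real.Gamma (1/2) * r ^ (-(1:ℝ)/2) * Real.exp (-(β * r)))) /
      (∫ r in Set.Ioi t, Real.sqrt (r / (r - t)) *
          Real.exp (-(r * x ^ 2) / (2 * t * (r - t))) *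
          (Real.sqrt β / Real.Gamma (1/2) * r ^ (-(1:ℝ)/2) * Real.exp (-(β * r))))) =
      Real.sqrt (2 * β) / |x| := by
  have ha : 0 < x ^ 2 / 2 := by positivity
  have heq := setIntegral_Ioi_rpow_neg_three_halves_eq hβ ht.ne' hx
  have hC : 0 < √β / Gamma (1 / 2) := div_pos (sqrt_pos.2 hβ) (Gamma_pos_of_pos one_half_pos)
  refine ⟨(integrableOn_Ioi_rpow_sub_mul_exp_iff ht.ne').2
      (gigKernel.integrableOn_of_lt_neg_one (by norm_num) ha hβ),
    (integrableOn_Ioi_rpow_sub_mul_exp_iff ht.ne').2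
      (gigKernel.integrableOn_of_neg_one_lt (by norm_num) ha hβ), heq, ?_⟩
  rw [setIntegral_congr_fun measurableSet_Ioi fun r (hr : r ∈ Ioi t) =>
      inv_mul_sqrt_div_mul_exp_mul_gammaHalfPrior _ β _ (ht.trans hr) (sub_pos.2 hr),
    setIntegral_congr_fun measurableSet_Ioi fun r (hr : r ∈ Ioi t) =>
      sqrt_div_mul_exp_mul_gammaHalfPrior _ β _ (ht.trans hr) (sub_pos.2 hr),
    integral_const_mul, integral_const_mul, heq, mul_div_mul_left _ _ hC.ne', mul_div_assoc,
    div_self (setIntegral_Ioi_rpow_neg_half_pos hβ ht.ne' hx).ne', mul_one]
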